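/- arXiv:2507.06114 — 2 statements merged into one kernel-verified Lean document; each statement's English description precedes it below -/
import Mathlib

section
/- (Convergence under uniqueness.) In the setting of the convergence theorem—α(δ) → 0 and δ²/α(δ) → 0 as δ → 0—assume additionally that the x*-S-minimum-norm solution x† is unique. Then for any family (x^δ)_{δ>0}, where x^δ is a minimizer of J_{α(δ),S,y^δ} over D(F) for data y^δ with ‖y − y^δ‖_Y ≤ δ, one has x^δ → x† strongly in L²(Ω) as δ → 0. -/
/-!
Minimality of `x^δ` tested against `x†` gives `J(x^δ) ≤ δ² + α‖x† − x*‖²`. Hence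
`F(x^δ) → y`, the part of `x^δ − x*` on `Ω ∖ S` tends to `0`, and, since `δ²/α → 0`,
`limsup ‖x^δ − x*‖² ≤ ‖x† − x*‖²`. Along any sequence `δ_k → 0⁺` the `x^{δ_k}` are bounded,
so a subsequence converges weakly. By the weak closedness of `F`, the weak closedness of the
subspace of functions vanishing on `Ω ∖ S` and the weak lower semicontinuity of the norm, the
weak limit is an `x*`-`S`-minimum-norm solution, hence equals `x†`. Weak convergence together
with `limsup ‖x^{δ_k} − x*‖ ≤ ‖x† − x*‖` is strong convergence, and since every sequence
`δ_k → 0⁺` has a subsequence along which `x^δ → x†`, the whole family converges.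
-/
open MeasureTheory Filter
open scoped RealInnerProductSpace ENNReal Topology

noncomputable section

/-- Weak sequential convergence in a real inner product space. -/
def WeakConv {H : Type*} [NormedAddCommGroup H] [InnerProductSpace ℝ H]
    (u : ℕ → H) (x : H) : Prop :=
  ∀ z : H, Tendsto (fun k => ⟪u k, z⟫) atTop (𝓝 ⟪x, z⟫)

/-- The squared `L²` mass of (a representative of) `x : L²(Ω)` over the set `T`. -/
def sqInt {n : ℕ} (Ω : Set (Fin n → ℝ)) (T : Set (Fin n → ℝ))
    (x : Lp ℝ 2 (volume.restrict Ω)) : ℝ :=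
  ∫ t in T, (x t) ^ 2 ∂(volume.restrict Ω)

/-- The Tikhonov-type functional
`J_{α,S,z}(x) = ‖F(x) − z‖² + α‖x − x*‖_{S⁺}² + ‖x − x*‖_{S⁻}²`. -/
def J {n : ℕ} (Ω : Set (Fin n → ℝ)) {Y : Type*} [NormedAddCommGroup Y]
    [InnerProductSpace ℝ Y]
    (F : Lp ℝ 2 (volume.restrict Ω) → Y) (xstar : Lp ℝ 2 (volume.restrict Ω))
    (α : ℝ) (S : Set (Fin n → ℝ)) (z : Y) (x : Lp ℝ 2 (volume.restrict Ω)) : ℝ :=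
  ‖F x - z‖ ^ 2 + (α * sqInt Ω S (x - xstar) + sqInt Ω (Ω \ S) (x - xstar))

/-- `x` is a minimizer of the functional `Jf` over the set `D`. -/
def IsMinimizer {X' : Type*} (Jf : X' → ℝ) (D : Set X') (x : X') : Prop :=
  x ∈ D ∧ ∀ x' ∈ D, Jf x ≤ Jf x'

/-- `x = 0` almost everywhere on `Ω ∖ S`. -/
def ZeroOff {n : ℕ} (Ω S : Set (Fin n → ℝ))
    (x : Lp ℝ 2 (volume.restrict Ω)) : Prop :=
  ∀ᵐ t ∂((volume.restrict Ω).restrict (Ω \ S)), x t = 0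

/-- `xdag` is an `x*`-`S`-minimum-norm solution of `F(x) = y`: it belongs to
`D(F)`, solves `F(xdag) = y`, vanishes a.e. on `Ω ∖ S`, and minimizes
`‖x − x*‖_{L²}` among all such solutions. -/
def IsMNS {n : ℕ} (Ω : Set (Fin n → ℝ)) {Y : Type*} [NormedAddCommGroup Y]
    [InnerProductSpace ℝ Y]
    (D : Set (Lp ℝ 2 (volume.restrict Ω))) (F : Lp ℝ 2 (volume.restrict Ω) → Y)
    (xstar : Lp ℝ 2 (volume.restrict Ω)) (S : Set (Fin n → ℝ)) (y : Y)
    (xdag : Lp ℝ 2 (volume.restrict Ω)) : Prop :=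
  xdag ∈ D ∧ F xdag = y ∧ ZeroOff Ω S xdag ∧
    ∀ x ∈ D, F x = y → ZeroOff Ω S x → ‖xdag - xstar‖ ≤ ‖x - xstar‖

local notation "L²(" Ω ")" => Lp ℝ 2 (volume.restrict Ω)

theorem tendsto_zero_of_sq_norm_le {ι E : Type*} [SeminormedAddCommGroup E] {l : Filter ι}
    {f : ι → E} {b : ι → ℝ} (hf : ∀ᶠ i in l, ‖f i‖ ^ 2 ≤ b i) (hb : Tendsto b l (𝓝 0)) :
    Tendsto f l (𝓝 0) := by
  rw [tendsto_zero_iff_norm_tendsto_zero]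
  refine squeeze_zero' (.of_forall fun _ => norm_nonneg _)
    (hf.mono fun _ => Real.le_sqrt_of_sq_le) ?_
  simpa using hb.sqrt

theorem tendsto_nhdsWithin_Ioi_of_norm_sub_le {E : Type*} [SeminormedAddCommGroup E]
    {f : ℝ → E} {y : E} (h : ∀ δ > 0, ‖y - f δ‖ ≤ δ) : Tendsto f (𝓝[>] 0) (𝓝 y) := by
  rw [tendsto_iff_norm_sub_tendsto_zero]
  refine squeeze_zero' (.of_forall fun _ => norm_nonneg _) ?_
    (tendsto_id.mono_left nhdsWithin_le_nhds)
  exact eventually_nhdsWithin_of_forall fun δ hδ => norm_sub_rev y (f δ) ▸ h δ hδ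

namespace WeakConv

variable {H K : Type*} [NormedAddCommGroup H] [InnerProductSpace ℝ H]
  [NormedAddCommGroup K] [InnerProductSpace ℝ K] {u : ℕ → H} {x : H}

theorem of_tendsto (h : Tendsto u atTop (𝓝 x)) : WeakConv u x :=
  fun _ => h.inner tendsto_const_nhds

theorem comp_tendsto (h : WeakConv u x) {φ : ℕ → ℕ} (hφ : Tendsto φ atTop atTop) :
    WeakConv (u ∘ φ) x :=
  fun z => (h z).comp hφ

theorem sub_const (h : WeakConv u x) (c : H) : WeakConv (fun k => u k - c) (x - c) := by
  intro z
  simpa only [inner_sub_left] using (h z).sub_const ⟪c, z⟫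

theorem unique {x' : H} (h : WeakConv u x) (h' : WeakConv u x') : x = x' :=
  ext_inner_right ℝ fun z => tendsto_nhds_unique (h z) (h' z)

theorem map [CompleteSpace H] [CompleteSpace K] (h : WeakConv u x) (L : H →L[ℝ] K) :
    WeakConv (fun k => L (u k)) (L x) := by
  intro z
  simpa only [ContinuousLinearMap.adjoint_inner_right] using h (L.adjoint z)

theorem sq_norm_le {b : ℕ → ℝ} {r : ℝ} (h : WeakConv u x)
    (hb : ∀ᶠ k in atTop, ‖u k‖ ^ 2 ≤ b k) (hr : Tendsto b atTop (𝓝 r)) : ‖x‖ ^ 2 ≤ r := by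
  have hle : ∀ᶠ k in atTop, 2 * ⟪u k, x⟫ ≤ b k + ‖x‖ ^ 2 := hb.mono fun k hk => by
    nlinarith [real_inner_le_norm (u k) x, sq_nonneg (‖u k‖ - ‖x‖)]
  have := le_of_tendsto_of_tendsto ((h x).const_mul 2) (hr.add_const _) hle
  rw [real_inner_self_eq_norm_sq] at this
  linarith

theorem tendsto_of_sq_norm_le {b : ℕ → ℝ} (h : WeakConv u x)
    (hb : ∀ᶠ k in atTop, ‖u k‖ ^ 2 ≤ b k) (hx : Tendsto b atTop (𝓝 (‖x‖ ^ 2))) :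
    Tendsto u atTop (𝓝 x) := by
  rw [tendsto_sub_nhds_zero_iff.symm]
  refine tendsto_zero_of_sq_norm_le (b := fun k => b k - 2 * ⟪u k, x⟫ + ‖x‖ ^ 2)
    (hb.mono fun k hk => by rw [norm_sub_sq_real]; linarith) ?_
  have := (hx.sub ((h x).const_mul 2)).add_const (‖x‖ ^ 2)
  rwa [real_inner_self_eq_norm_sq, show ‖x‖ ^ 2 - 2 * ‖x‖ ^ 2 + ‖x‖ ^ 2 = 0 by ring] at this

end WeakConv

theorem exists_weakConv_subseq {H : Type*} [NormedAddCommGroup H] [InnerProductSpace ℝ H]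
    [CompleteSpace H] [TopologicalSpace.SeparableSpace H] {u : ℕ → H} {C : ℝ}
    (hu : ∀ᶠ k in atTop, ‖u k‖ ≤ C) :
    ∃ x, ∃ φ : ℕ → ℕ, StrictMono φ ∧ WeakConv (u ∘ φ) x := by
  obtain ⟨N, hN⟩ := eventually_atTop.1 hu
  have hmem : ∀ k, StrongDual.toWeakDual (InnerProductSpace.toDual ℝ H (u (k + N))) ∈
      WeakDual.toStrongDual ⁻¹' Metric.closedBall 0 C := fun k => by
    simpa using hN (k + N) (Nat.le_add_left N k)
  obtain ⟨ℓ, -, φ, hφ, hlim⟩ := WeakDual.isSeqCompact_closedBall ℝ H 0 C hmem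
  refine ⟨(InnerProductSpace.toDual ℝ H).symm (WeakDual.toStrongDual ℓ), fun k => φ k + N,
    fun a b hab => Nat.add_lt_add_right (hφ hab) N, fun z => ?_⟩
  rw [InnerProductSpace.toDual_symm_apply]
  exact ((WeakDual.eval_continuous z).tendsto ℓ).comp hlim

theorem tendsto_of_weakConv_limits_eq {H ι : Type*} [NormedAddCommGroup H]
    [InnerProductSpace ℝ H] [CompleteSpace H] [TopologicalSpace.SeparableSpace H]
    {l : Filter ι} [l.IsCountablyGenerated] {f : ι → H} {b : ι → ℝ} {c x : H}
    (hb : ∀ᶠ i in l, ‖f i - c‖ ^ 2 ≤ b i) (hbx : Tendsto b l (𝓝 (‖x - c‖ ^ 2)))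
    (hcl : ∀ (s : ℕ → ι) (x' : H), Tendsto s atTop l → WeakConv (f ∘ s) x' →
      ‖x' - c‖ ≤ ‖x - c‖ → x' = x) :
    Tendsto f l (𝓝 x) := by
  refine tendsto_of_subseq_tendsto fun s hs => ?_
  have hbs : ∀ᶠ k in atTop, ‖f (s k) - c‖ ^ 2 ≤ b (s k) := hs.eventually hb
  have hbounded : ∀ᶠ k in atTop, ‖f (s k)‖ ≤ √(‖x - c‖ ^ 2 + 1) + ‖c‖ := by
    filter_upwards [hbs, hs.eventually (hbx.eventually (gt_mem_nhds (lt_add_one _)))]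
      with k hk hbk
    calc ‖f (s k)‖ ≤ ‖c‖ + ‖f (s k) - c‖ := norm_le_norm_add_norm_sub' _ _
      _ ≤ √(‖x - c‖ ^ 2 + 1) + ‖c‖ := by
        linarith [Real.le_sqrt_of_sq_le (hk.trans hbk.le)]
  obtain ⟨x', φ, hφ, hw⟩ := exists_weakConv_subseq hbounded
  have hsφ : Tendsto (s ∘ φ) atTop l := hs.comp hφ.tendsto_atTop
  have hbsφ : ∀ᶠ k in atTop, ‖f (s (φ k)) - c‖ ^ 2 ≤ b (s (φ k)) :=
    hφ.tendsto_atTop.eventually hbs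
  have hwc := hw.sub_const c
  obtain rfl : x' = x := hcl (s ∘ φ) x' hsφ hw <|
    (sq_le_sq₀ (norm_nonneg _) (norm_nonneg _)).1 (hwc.sq_norm_le hbsφ (hbx.comp hsφ))
  exact ⟨φ, by simpa using (hwc.tendsto_of_sq_norm_le hbsφ (hbx.comp hsφ)).add_const c⟩

section L2

variable {n : ℕ} {Ω S : Set (Fin n → ℝ)}

abbrev restrictL2 (Ω T : Set (Fin n → ℝ)) :
    L²(Ω) →L[ℝ] Lp ℝ 2 ((volume.restrict Ω).restrict T) :=
  LpToLpRestrictCLM (Fin n → ℝ) ℝ ℝ (volume.restrict Ω) 2 T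

theorem sqInt_nonneg (T : Set (Fin n → ℝ)) (v : L²(Ω)) : 0 ≤ sqInt Ω T v :=
  integral_nonneg fun _ => sq_nonneg _

theorem sqInt_eq_sq_norm_restrictL2 (T : Set (Fin n → ℝ)) (v : L²(Ω)) :
    sqInt Ω T v = ‖restrictL2 Ω T v‖ ^ 2 := by
  rw [← real_inner_self_eq_norm_sq, L2.inner_def, sqInt]
  refine integral_congr_ae ?_
  filter_upwards [LpToLpRestrictCLM_coeFn ℝ T v] with t ht
  simp [ht, sq]

theorem sq_norm_eq_sqInt_add_sqInt (hΩ : MeasurableSet Ω) (hS : MeasurableSet S) (v : L²(Ω)) :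
    ‖v‖ ^ 2 = sqInt Ω S v + sqInt Ω (Ω \ S) v := by
  have hcompl : (volume.restrict Ω).restrict Sᶜ = (volume.restrict Ω).restrict (Ω \ S) := by
    rw [Measure.restrict_restrict hS.compl, Measure.restrict_restrict (hΩ.diff hS),
      ← Set.sdiff_eq_compl_inter, Set.inter_eq_left.2 Set.sdiff_subset]
  rw [← real_inner_self_eq_norm_sq, L2.inner_def, sqInt, sqInt, ← hcompl,
    integral_add_compl hS (Lp.memLp v).integrable_sq]
  simp [sq]

theorem zeroOff_iff_restrictL2_eq_zero (v : L²(Ω)) :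
    ZeroOff Ω S v ↔ restrictL2 Ω (Ω \ S) v = 0 := by
  rw [Lp.eq_zero_iff_ae_eq_zero]
  have hv := LpToLpRestrictCLM_coeFn ℝ (Ω \ S) v
  exact ⟨hv.trans, hv.symm.trans⟩

theorem zeroOff_sub_iff {x x' : L²(Ω)} (hx' : ZeroOff Ω S x') :
    ZeroOff Ω S (x - x') ↔ ZeroOff Ω S x := by
  rw [zeroOff_iff_restrictL2_eq_zero] at hx' ⊢
  rw [zeroOff_iff_restrictL2_eq_zero, map_sub, hx', sub_zero]

end L2

section Tikhonov

variable {n : ℕ} {Ω S : Set (Fin n → ℝ)} {Y : Type*} [NormedAddCommGroup Y]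
  [InnerProductSpace ℝ Y] {F : L²(Ω) → Y} {xstar x : L²(Ω)} {α : ℝ} {z : Y}

theorem J_eq_of_zeroOff (hΩ : MeasurableSet Ω) (hS : MeasurableSet S)
    (hx : ZeroOff Ω S (x - xstar)) :
    J Ω F xstar α S z x = ‖F x - z‖ ^ 2 + α * ‖x - xstar‖ ^ 2 := by
  rw [J, sq_norm_eq_sqInt_add_sqInt hΩ hS, sqInt_eq_sq_norm_restrictL2 (Ω \ S),
    (zeroOff_iff_restrictL2_eq_zero _).1 hx]
  simp

theorem sq_norm_apply_sub_le_of_J_le {E : ℝ} (hα : 0 ≤ α) (h : J Ω F xstar α S z x ≤ E) :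
    ‖F x - z‖ ^ 2 ≤ E := by
  rw [J] at h
  linarith [mul_nonneg hα (sqInt_nonneg S (x - xstar)), sqInt_nonneg (Ω \ S) (x - xstar)]

theorem sq_norm_restrictL2_le_of_J_le {E : ℝ} (hα : 0 ≤ α) (h : J Ω F xstar α S z x ≤ E) :
    ‖restrictL2 Ω (Ω \ S) (x - xstar)‖ ^ 2 ≤ E := by
  rw [J] at h
  rw [← sqInt_eq_sq_norm_restrictL2]
  linarith [mul_nonneg hα (sqInt_nonneg S (x - xstar)), sq_nonneg ‖F x - z‖]

theorem sq_norm_sub_le_of_J_le (hΩ : MeasurableSet Ω) (hS : MeasurableSet S) {d m : ℝ}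
    (hα : 0 < α) (h : J Ω F xstar α S z x ≤ d + α * m) :
    ‖x - xstar‖ ^ 2 ≤ d / α + m + (d + α * m) := by
  rw [J] at h
  have hS_le : sqInt Ω S (x - xstar) ≤ d / α + m := by
    rw [div_add' _ _ _ hα.ne', le_div_iff₀ hα]
    linarith [sq_nonneg ‖F x - z‖, sqInt_nonneg (Ω \ S) (x - xstar)]
  rw [sq_norm_eq_sqInt_add_sqInt hΩ hS]
  linarith [sq_nonneg ‖F x - z‖, mul_nonneg hα.le (sqInt_nonneg S (x - xstar))]

theorem isMNS_of_weakConv {D : Set L²(Ω)} {xdag x' : L²(Ω)} {y : Y} {xδ : ℝ → L²(Ω)}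
    {s : ℕ → ℝ}
    (hFweak : ∀ (u : ℕ → L²(Ω)) (x : L²(Ω)) (z : Y),
      (∀ k, u k ∈ D) → WeakConv u x → WeakConv (fun k => F (u k)) z → x ∈ D ∧ F x = z)
    (hxstar : ZeroOff Ω S xstar) (hxdag : IsMNS Ω D F xstar S y xdag)
    (hxδD : ∀ δ > 0, xδ δ ∈ D) (hFxδ : Tendsto (fun δ => F (xδ δ)) (𝓝[>] 0) (𝓝 y))
    (hRxδ : Tendsto (fun δ => restrictL2 Ω (Ω \ S) (xδ δ - xstar)) (𝓝[>] 0) (𝓝 0))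
    (hs : Tendsto s atTop (𝓝[>] 0)) (hw : WeakConv (xδ ∘ s) x')
    (hx' : ‖x' - xstar‖ ≤ ‖xdag - xstar‖) :
    IsMNS Ω D F xstar S y x' := by
  -- `hFweak` wants the whole sequence in `D`: drop the finitely many `k` with `s k ≤ 0`
  obtain ⟨N, hN⟩ := eventually_atTop.1 (hs.eventually self_mem_nhdsWithin)
  have hshift := tendsto_add_atTop_nat N
  obtain ⟨hx'D, hFx'⟩ := hFweak (xδ ∘ s ∘ (· + N)) x' y
    (fun k => hxδD _ (hN _ (Nat.le_add_left N k))) (hw.comp_tendsto hshift)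
    (.of_tendsto ((hFxδ.comp hs).comp hshift))
  have hx'Z : ZeroOff Ω S (x' - xstar) := by
    rw [zeroOff_iff_restrictL2_eq_zero]
    exact ((hw.sub_const xstar).map _).unique (.of_tendsto (hRxδ.comp hs))
  exact ⟨hx'D, hFx', (zeroOff_sub_iff hxstar).1 hx'Z,
    fun x hx hFx hxZ => hx'.trans (hxdag.2.2.2 x hx hFx hxZ)⟩

end Tikhonov

theorem convergence_under_uniqueness_general
    {n : ℕ} (Ω : Set (Fin n → ℝ)) (hΩmeas : MeasurableSet Ω)
    {Y : Type*} [NormedAddCommGroup Y] [InnerProductSpace ℝ Y]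
    (D : Set (Lp ℝ 2 (volume.restrict Ω)))
    (F : Lp ℝ 2 (volume.restrict Ω) → Y)
    (hFweak : ∀ (u : ℕ → Lp ℝ 2 (volume.restrict Ω))
      (x : Lp ℝ 2 (volume.restrict Ω)) (z : Y),
      (∀ k, u k ∈ D) → WeakConv u x → WeakConv (fun k => F (u k)) z →
        x ∈ D ∧ F x = z)
    (xstar : Lp ℝ 2 (volume.restrict Ω))
    (S : Set (Fin n → ℝ)) (hSmeas : MeasurableSet S)
    (hxstar : ZeroOff Ω S xstar)
    (y : Y)
    (α : ℝ → ℝ) (hαpos : ∀ δ > (0 : ℝ), 0 < α δ)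
    (hα0 : Tendsto α (𝓝[>] (0 : ℝ)) (𝓝 0))
    (hδ2α : Tendsto (fun δ => δ ^ 2 / α δ) (𝓝[>] (0 : ℝ)) (𝓝 0))
    (xdag : Lp ℝ 2 (volume.restrict Ω)) (hxdag : IsMNS Ω D F xstar S y xdag)
    (huniq : ∀ x', IsMNS Ω D F xstar S y x' → x' = xdag)
    (xδ : ℝ → Lp ℝ 2 (volume.restrict Ω)) (yδ : ℝ → Y)
    (hdata : ∀ δ > (0 : ℝ), ‖y - yδ δ‖ ≤ δ)
    (hmin : ∀ δ > (0 : ℝ), IsMinimizer (J Ω F xstar (α δ) S (yδ δ)) D (xδ δ)) :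
    Tendsto xδ (𝓝[>] (0 : ℝ)) (𝓝 xdag) := by
  -- makes `L²(Ω)` separable, for weak sequential compactness
  have : Fact ((2 : ℝ≥0∞) ≠ ∞) := ⟨ENNReal.ofNat_ne_top⟩
  have hpos {P : ℝ → Prop} (h : ∀ δ > 0, P δ) : ∀ᶠ δ in 𝓝[>] 0, P δ :=
    eventually_nhdsWithin_of_forall h
  set M := ‖xdag - xstar‖
  have hJ : ∀ δ > 0, J Ω F xstar (α δ) S (yδ δ) (xδ δ) ≤ δ ^ 2 + α δ * M ^ 2 := fun δ hδ => by
    refine ((hmin δ hδ).2 xdag hxdag.1).trans ?_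
    rw [J_eq_of_zeroOff hΩmeas hSmeas ((zeroOff_sub_iff hxstar).2 hxdag.2.2.1), hxdag.2.1]
    gcongr
    exact hdata δ hδ
  have hE : Tendsto (fun δ => δ ^ 2 + α δ * M ^ 2) (𝓝[>] 0) (𝓝 0) := by
    simpa using (((continuous_pow 2).tendsto' 0 0 (zero_pow two_ne_zero)).mono_left
      nhdsWithin_le_nhds).add (hα0.mul_const (M ^ 2))
  have hFxδ : Tendsto (fun δ => F (xδ δ)) (𝓝[>] 0) (𝓝 y) := by
    simpa only [sub_add_cancel, zero_add] using (tendsto_zero_of_sq_norm_le (hpos fun δ hδ =>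
      sq_norm_apply_sub_le_of_J_le (hαpos δ hδ).le (hJ δ hδ)) hE).add
      (tendsto_nhdsWithin_Ioi_of_norm_sub_le hdata)
  have hRxδ := tendsto_zero_of_sq_norm_le (hpos fun δ hδ =>
    sq_norm_restrictL2_le_of_J_le (hαpos δ hδ).le (hJ δ hδ)) hE
  have hB : Tendsto (fun δ => δ ^ 2 / α δ + M ^ 2 + (δ ^ 2 + α δ * M ^ 2)) (𝓝[>] 0)
      (𝓝 (M ^ 2)) := by
    simpa using (hδ2α.add_const (M ^ 2)).add hE
  exact tendsto_of_weakConv_limits_eq (hpos fun δ hδ =>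
    sq_norm_sub_le_of_J_le hΩmeas hSmeas (hαpos δ hδ) (hJ δ hδ)) hB
    fun s x' hs hw hx' => huniq x' <| isMNS_of_weakConv hFweak hxstar hxdag
      (fun δ hδ => (hmin δ hδ).1) hFxδ hRxδ hs hw hx'

/-- **Convergence under uniqueness**: with `α(δ) → 0` and `δ²/α(δ) → 0` as
`δ → 0⁺`, if the `x*`-`S`-minimum-norm solution `x†` is unique, then for any
family `(x^δ)_{δ>0}` of minimizers of `J_{α(δ),S,y^δ}` over `D(F)` with data
`‖y − y^δ‖ ≤ δ`, one has `x^δ → x†` strongly in `L²(Ω)` as `δ → 0⁺`. -/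
theorem convergence_under_uniqueness
    {n : ℕ} (Ω : Set (Fin n → ℝ)) (hΩmeas : MeasurableSet Ω)
    (hΩbdd : Bornology.IsBounded Ω)
    {Y : Type*} [NormedAddCommGroup Y] [InnerProductSpace ℝ Y] [CompleteSpace Y]
    (D : Set (Lp ℝ 2 (volume.restrict Ω))) (hD : D.Nonempty)
    (F : Lp ℝ 2 (volume.restrict Ω) → Y)
    (hFcont : ContinuousOn F D)
    (hFweak : ∀ (u : ℕ → Lp ℝ 2 (volume.restrict Ω))
      (x : Lp ℝ 2 (volume.restrict Ω)) (z : Y),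
      (∀ k, u k ∈ D) → WeakConv u x → WeakConv (fun k => F (u k)) z →
        x ∈ D ∧ F x = z)
    (xstar : Lp ℝ 2 (volume.restrict Ω))
    (S : Set (Fin n → ℝ)) (hSmeas : MeasurableSet S) (hSΩ : S ⊆ Ω)
    (hxstar : ZeroOff Ω S xstar)
    (y : Y)
    (α : ℝ → ℝ) (hαpos : ∀ δ > (0 : ℝ), 0 < α δ)
    (hα0 : Tendsto α (𝓝[>] (0 : ℝ)) (𝓝 0))
    (hδ2α : Tendsto (fun δ => δ ^ 2 / α δ) (𝓝[>] (0 : ℝ)) (𝓝 0))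
    (xdag : Lp ℝ 2 (volume.restrict Ω)) (hxdag : IsMNS Ω D F xstar S y xdag)
    (huniq : ∀ x', IsMNS Ω D F xstar S y x' → x' = xdag)
    (xδ : ℝ → Lp ℝ 2 (volume.restrict Ω)) (yδ : ℝ → Y)
    (hdata : ∀ δ > (0 : ℝ), ‖y - yδ δ‖ ≤ δ)
    (hmin : ∀ δ > (0 : ℝ), IsMinimizer (J Ω F xstar (α δ) S (yδ δ)) D (xδ δ)) :
    Tendsto xδ (𝓝[>] (0 : ℝ)) (𝓝 xdag) :=
  convergence_under_uniqueness_general Ω hΩmeas D F hFweak xstar S hSmeas hxstar y α hαpos hα0 hδ2α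
    xdag hxdag huniq xδ yδ hdata hmin
end
end

section
/- (Completed-square estimate.) Let D(F) be convex, let y ∈ Y, y^δ ∈ Y with ‖y − y^δ‖_Y ≤ δ, let x† ∈ D(F) satisfy F(x†) = y and x† = 0 a.e. on Ω∖S, and assume x* = 0 a.e. on Ω∖S. Assume: F is Fréchet differentiable; there exist γ ≥ 0 and ρ > 0 such that ‖F'(x†) − F'(x)‖ ≤ γ‖x† − x‖_{L²} for all x ∈ D(F) with ‖x − x†‖_{L²} < ρ; and there exists ω ∈ Y with x† − x* = F'(x†)*ω. Let 0 < α and let x be a minimizer of J_{α,S,y^δ} over D(F) satisfying ‖x − x†‖_{L²} < ρ. Then (‖F(x) − y^δ‖_Y − α‖ω‖_Y)² + α(1 − γ‖ω‖_Y)‖x − x†‖_{L²}² + (1 − α)‖x − x†‖_{S⁻}² ≤ (δ + α‖ω‖_Y)². -/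
/-!
Compare `J` at the minimizer `x` with its value at `x†`. Since `x† − x*` vanishes off `S`, the
weighted norm satisfies `‖v‖_{S,α}² = α‖v‖² + (1 − α)‖v‖_{S⁻}²` and the `S⁻` parts of `x − x*`
and `x − x†` agree, so minimality yields
`‖F x − y^δ‖² + α‖x − x†‖² + (1 − α)‖x − x†‖_{S⁻}² + 2α⟪x − x†, x† − x*⟫ ≤ δ²`.
By the source condition the cross term is `⟪F'(x†)(x − x†), ω⟫`; integrating the Lipschitz bound
on `F'` along the segment `[x†, x]` gives `‖F x − y − F'(x†)(x − x†)‖ ≤ γ/2 ‖x − x†‖²`, so the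
cross term is at least `−(‖F x − y^δ‖ + δ + γ/2 ‖x − x†‖²)‖ω‖`. Completing the square finishes.
-/

open MeasureTheory Filter

open MeasureTheory Filter
open scoped RealInnerProductSpace ENNReal Topology

noncomputable section

theorem MeasureTheory.L2.norm_sq_eq_integral_sq {α : Type*} [MeasurableSpace α]
    {μ : Measure α} (v : Lp ℝ 2 μ) : ‖v‖ ^ 2 = ∫ t, v t ^ 2 ∂μ := by
  rw [← real_inner_self_eq_norm_sq, MeasureTheory.L2.inner_def]
  simp only [RCLike.inner_apply, conj_trivial, sq]

open Set in
theorem norm_sub_sub_fderiv_le_sq_of_segment {E F : Type*} [NormedAddCommGroup E]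
    [NormedSpace ℝ E] [NormedAddCommGroup F] [NormedSpace ℝ F] {f : E → F}
    {f' : E → E →L[ℝ] F} {x₀ x : E} {γ : ℝ}
    (hf : ∀ z ∈ segment ℝ x₀ x, HasFDerivWithinAt f (f' z) (segment ℝ x₀ x) z)
    (hf' : ∀ z ∈ segment ℝ x₀ x, ‖f' z - f' x₀‖ ≤ γ * ‖z - x₀‖) :
    ‖f x - f x₀ - f' x₀ (x - x₀)‖ ≤ γ / 2 * ‖x - x₀‖ ^ 2 := by
  set d := x - x₀
  set p : ℝ → E := ⇑(AffineMap.lineMap (k := ℝ) x₀ x)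
  have hp : MapsTo p (Icc 0 1) (segment ℝ x₀ x) := by
    rw [segment_eq_image_lineMap]
    exact mapsTo_image _ _
  have hpd (t : ℝ) : ‖p t - x₀‖ = |t| * ‖d‖ := by
    rw [← dist_eq_norm, dist_lineMap_left, Real.norm_eq_abs, dist_eq_norm']
  set g : ℝ → F := fun t => f (p t) - f x₀ - t • f' x₀ d
  have hg (t) (ht : t ∈ Icc (0 : ℝ) 1) :
      HasDerivWithinAt g ((f' (p t) - f' x₀) d) (Icc 0 1) t := by
    have hfp := (hf _ (hp ht)).comp_hasDerivWithinAt t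
      AffineMap.hasDerivWithinAt_lineMap hp
    exact ((hfp.sub_const (f x₀)).sub
      ((hasDerivWithinAt_id t _).smul_const (f' x₀ d))).congr_deriv (by rw [one_smul, sub_apply])
  have hg_right (t) (ht : t ∈ Ico (0 : ℝ) 1) :
      HasDerivWithinAt g ((f' (p t) - f' x₀) d) (Ici t) t :=
    (hg t (Ico_subset_Icc_self ht)).mono_of_mem_nhdsWithin
      (mem_of_superset (Icc_mem_nhdsGE ht.2) (Icc_subset_Icc_left ht.1))
  have hB (t : ℝ) : HasDerivAt (fun t => γ / 2 * ‖d‖ ^ 2 * t ^ 2) (γ * ‖d‖ ^ 2 * t) t :=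
    ((hasDerivAt_pow 2 t).const_mul (γ / 2 * ‖d‖ ^ 2)).congr_deriv (by push_cast; ring)
  have hbound (t) (ht : t ∈ Ico (0 : ℝ) 1) : ‖(f' (p t) - f' x₀) d‖ ≤ γ * ‖d‖ ^ 2 * t := by
    calc ‖(f' (p t) - f' x₀) d‖ ≤ ‖f' (p t) - f' x₀‖ * ‖d‖ := (f' (p t) - f' x₀).le_opNorm d
      _ ≤ γ * ‖p t - x₀‖ * ‖d‖ := by
        gcongr; exact hf' _ (hp (Ico_subset_Icc_self ht))
      _ = γ * ‖d‖ ^ 2 * t := by rw [hpd, abs_of_nonneg ht.1]; ring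
  have key := image_norm_le_of_norm_deriv_right_le_deriv_boundary
    (fun t ht => (hg t ht).continuousWithinAt) hg_right (by simp [g, p]) hB hbound
    (right_mem_Icc.2 zero_le_one)
  simpa [g, p] using key

theorem norm_sub_sub_fderiv_le_sq_of_convex {E F : Type*} [NormedAddCommGroup E]
    [NormedSpace ℝ E] [NormedAddCommGroup F] [NormedSpace ℝ F] {f : E → F}
    {f' : E → E →L[ℝ] F} {D : Set E} {x₀ x : E} {γ ρ : ℝ} (hD : Convex ℝ D)
    (hf : ∀ z ∈ D, HasFDerivWithinAt f (f' z) D z)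
    (hf' : ∀ z ∈ D, ‖z - x₀‖ < ρ → ‖f' z - f' x₀‖ ≤ γ * ‖z - x₀‖)
    (hx₀ : x₀ ∈ D) (hx : x ∈ D) (hxρ : ‖x - x₀‖ < ρ) :
    ‖f x - f x₀ - f' x₀ (x - x₀)‖ ≤ γ / 2 * ‖x - x₀‖ ^ 2 := by
  have hseg : segment ℝ x₀ x ⊆ D ∩ Metric.ball x₀ ρ :=
    Set.subset_inter (hD.segment_subset hx₀ hx)
      ((convex_ball x₀ ρ).segment_subset
        (Metric.mem_ball_self ((norm_nonneg _).trans_lt hxρ)) (mem_ball_iff_norm.2 hxρ))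
  exact norm_sub_sub_fderiv_le_sq_of_segment
    (fun z hz => (hf z (hseg hz).1).mono fun w hw => (hseg hw).1)
    (fun z hz => hf' z (hseg hz).1 (mem_ball_iff_norm.1 (hseg hz).2))

section sqInt

variable {n : ℕ} {Ω S : Set (Fin n → ℝ)}

theorem sqInt_add_sqInt_diff (hS : MeasurableSet S) (v : Lp ℝ 2 (volume.restrict Ω)) :
    sqInt Ω S v + sqInt Ω (Ω \ S) v = ‖v‖ ^ 2 := by
  have hdiff : (volume.restrict Ω).restrict (Ω \ S) = (volume.restrict Ω).restrict Sᶜ := by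
    rw [Measure.restrict_restrict_of_subset Set.sdiff_subset, Measure.restrict_restrict hS.compl,
      Set.sdiff_eq, Set.inter_comm]
  rw [sqInt, sqInt, hdiff, integral_add_compl hS (Lp.memLp v).integrable_sq,
    L2.norm_sq_eq_integral_sq]

theorem sqInt_diff_sub_of_zeroOff {u : Lp ℝ 2 (volume.restrict Ω)} (hu : ZeroOff Ω S u)
    (v : Lp ℝ 2 (volume.restrict Ω)) : sqInt Ω (Ω \ S) (v - u) = sqInt Ω (Ω \ S) v := by
  refine integral_congr_ae ?_
  filter_upwards [ae_restrict_of_ae (Lp.coeFn_sub v u), hu] with t hsub hut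
  rw [hsub, Pi.sub_apply, hut, sub_zero]

theorem sqInt_diff_eq_zero_of_zeroOff {u : Lp ℝ 2 (volume.restrict Ω)} (hu : ZeroOff Ω S u) :
    sqInt Ω (Ω \ S) u = 0 := by
  refine integral_eq_zero_of_ae ?_
  filter_upwards [hu] with t hut
  simp [hut]

theorem J_eq_norm_sq_add_sqInt {Y : Type*} [NormedAddCommGroup Y] [InnerProductSpace ℝ Y]
    (hS : MeasurableSet S) (F : Lp ℝ 2 (volume.restrict Ω) → Y)
    (xstar : Lp ℝ 2 (volume.restrict Ω)) (α : ℝ) (z : Y) (x : Lp ℝ 2 (volume.restrict Ω)) :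
    J Ω F xstar α S z x =
      ‖F x - z‖ ^ 2 + α * ‖x - xstar‖ ^ 2 + (1 - α) * sqInt Ω (Ω \ S) (x - xstar) := by
  rw [J, ← sqInt_add_sqInt_diff hS]
  ring

end sqInt

theorem completed_square_estimate_general
    {n : ℕ} (Ω : Set (Fin n → ℝ))
    {Y : Type*} [NormedAddCommGroup Y] [InnerProductSpace ℝ Y] [CompleteSpace Y]
    (D : Set (Lp ℝ 2 (volume.restrict Ω)))
    (hDconv : Convex ℝ D)
    (F : Lp ℝ 2 (volume.restrict Ω) → Y)
    (xstar : Lp ℝ 2 (volume.restrict Ω))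
    (S : Set (Fin n → ℝ)) (hSmeas : MeasurableSet S)
    (hxstar : ZeroOff Ω S xstar)
    (y : Y) (δ : ℝ) (yδ : Y) (hyδ : ‖y - yδ‖ ≤ δ)
    (xdag : Lp ℝ 2 (volume.restrict Ω)) (hxdagD : xdag ∈ D)
    (hxdagF : F xdag = y) (hxdag0 : ZeroOff Ω S xdag)
    (F' : Lp ℝ 2 (volume.restrict Ω) → (Lp ℝ 2 (volume.restrict Ω) →L[ℝ] Y))
    (hFderiv : ∀ x ∈ D, HasFDerivWithinAt F (F' x) D x)
    (γ : ℝ) (ρ : ℝ)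
    (hLip : ∀ x ∈ D, ‖x - xdag‖ < ρ → ‖F' xdag - F' x‖ ≤ γ * ‖xdag - x‖)
    (ω : Y) (hω : xdag - xstar = ContinuousLinearMap.adjoint (F' xdag) ω)
    (α : ℝ) (hα : 0 < α)
    (x : Lp ℝ 2 (volume.restrict Ω))
    (hx : IsMinimizer (J Ω F xstar α S yδ) D x)
    (hxball : ‖x - xdag‖ < ρ) :
    (‖F x - yδ‖ - α * ‖ω‖) ^ 2 + α * (1 - γ * ‖ω‖) * ‖x - xdag‖ ^ 2 +
        (1 - α) * sqInt Ω (Ω \ S) (x - xdag) ≤ (δ + α * ‖ω‖) ^ 2 := by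
  obtain ⟨hxD, hxmin⟩ := hx
  have htaylor : ‖F x - y - F' xdag (x - xdag)‖ ≤ γ / 2 * ‖x - xdag‖ ^ 2 := hxdagF ▸
    norm_sub_sub_fderiv_le_sq_of_convex hDconv hFderiv
      (fun z hz hzρ => by rw [norm_sub_rev, norm_sub_rev z]; exact hLip z hz hzρ)
      hxdagD hxD hxball
  have hsource :
      -⟪x - xdag, xdag - xstar⟫ ≤ (‖F x - yδ‖ + δ + γ / 2 * ‖x - xdag‖ ^ 2) * ‖ω‖ := by
    rw [hω, ContinuousLinearMap.adjoint_inner_right, ← inner_neg_left]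
    refine (real_inner_le_norm _ _).trans (mul_le_mul_of_nonneg_right ?_ (norm_nonneg ω))
    calc ‖-F' xdag (x - xdag)‖
        = ‖(F x - yδ) + (yδ - y) - (F x - y - F' xdag (x - xdag))‖ := by
          rw [norm_neg]; congr 1; abel
      _ ≤ ‖F x - yδ‖ + ‖yδ - y‖ + ‖F x - y - F' xdag (x - xdag)‖ :=
        norm_sub_le_of_le (norm_add_le _ _) le_rfl
      _ ≤ _ := by rw [norm_sub_rev yδ]; linarith
  have hJ := hxmin xdag hxdagD
  rw [J_eq_norm_sq_add_sqInt hSmeas, J_eq_norm_sq_add_sqInt hSmeas, hxdagF,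
    sqInt_diff_sub_of_zeroOff hxstar, sqInt_diff_sub_of_zeroOff hxstar,
    sqInt_diff_eq_zero_of_zeroOff hxdag0, ← sqInt_diff_sub_of_zeroOff hxdag0 x,
    ← sub_add_sub_cancel x xdag xstar, norm_add_sq_real] at hJ
  have hδ : ‖y - yδ‖ ^ 2 ≤ δ ^ 2 := pow_le_pow_left₀ (norm_nonneg _) hyδ 2
  linarith [mul_le_mul_of_nonneg_left hsource (by linarith : 0 ≤ 2 * α)]

/-- **Completed-square estimate** (key step in the convergence-rate proof):
under convexity of `D(F)`, Fréchet differentiability of `F`, a Lipschitz bound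
on the derivative near `x†`, and the source condition `x† − x* = F'(x†)*ω`,
every minimizer `x` of `J_{α,S,y^δ}` over `D(F)` with `‖x − x†‖ < ρ` satisfies
`(‖F(x) − y^δ‖ − α‖ω‖)² + α(1 − γ‖ω‖)‖x − x†‖² + (1 − α)‖x − x†‖_{S⁻}²
  ≤ (δ + α‖ω‖)²`. -/
theorem completed_square_estimate
    {n : ℕ} (Ω : Set (Fin n → ℝ)) (hΩmeas : MeasurableSet Ω)
    (hΩbdd : Bornology.IsBounded Ω)
    {Y : Type*} [NormedAddCommGroup Y] [InnerProductSpace ℝ Y] [CompleteSpace Y]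
    (D : Set (Lp ℝ 2 (volume.restrict Ω))) (hD : D.Nonempty)
    (hDconv : Convex ℝ D)
    (F : Lp ℝ 2 (volume.restrict Ω) → Y)
    (hFcont : ContinuousOn F D)
    (hFweak : ∀ (u : ℕ → Lp ℝ 2 (volume.restrict Ω))
      (x : Lp ℝ 2 (volume.restrict Ω)) (z : Y),
      (∀ k, u k ∈ D) → WeakConv u x → WeakConv (fun k => F (u k)) z →
        x ∈ D ∧ F x = z)
    (xstar : Lp ℝ 2 (volume.restrict Ω))
    (S : Set (Fin n → ℝ)) (hSmeas : MeasurableSet S) (hSΩ : S ⊆ Ω)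
    (hxstar : ZeroOff Ω S xstar)
    (y : Y) (δ : ℝ) (yδ : Y) (hyδ : ‖y - yδ‖ ≤ δ)
    (xdag : Lp ℝ 2 (volume.restrict Ω)) (hxdagD : xdag ∈ D)
    (hxdagF : F xdag = y) (hxdag0 : ZeroOff Ω S xdag)
    (F' : Lp ℝ 2 (volume.restrict Ω) → (Lp ℝ 2 (volume.restrict Ω) →L[ℝ] Y))
    (hFderiv : ∀ x ∈ D, HasFDerivWithinAt F (F' x) D x)
    (γ : ℝ) (hγ : 0 ≤ γ) (ρ : ℝ) (hρ : 0 < ρ)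
    (hLip : ∀ x ∈ D, ‖x - xdag‖ < ρ → ‖F' xdag - F' x‖ ≤ γ * ‖xdag - x‖)
    (ω : Y) (hω : xdag - xstar = ContinuousLinearMap.adjoint (F' xdag) ω)
    (α : ℝ) (hα : 0 < α)
    (x : Lp ℝ 2 (volume.restrict Ω))
    (hx : IsMinimizer (J Ω F xstar α S yδ) D x)
    (hxball : ‖x - xdag‖ < ρ) :
    (‖F x - yδ‖ - α * ‖ω‖) ^ 2 + α * (1 - γ * ‖ω‖) * ‖x - xdag‖ ^ 2 +
        (1 - α) * sqInt Ω (Ω \ S) (x - xdag) ≤ (δ + α * ‖ω‖) ^ 2 :=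
  completed_square_estimate_general Ω D hDconv F xstar S hSmeas hxstar y δ yδ hyδ xdag hxdagD hxdagF
    hxdag0 F' hFderiv γ ρ hLip ω hω α hα x hx hxball
end
end
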